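/- Let X be a (possibly infinite) set of alternatives. A stochastic choice dataset P is rationalizable by a probability measure over strict total orders of X if and only if P satisfies the Axiom of Revealed Stochastic Preference. -/

import Mathlib

open MeasureTheory

attribute [local instance] Classical.propDecidable

/-- The space of strict total orders on `X`: irreflexive, transitive relations under
which any two distinct elements are comparable. -/
def StrictTotalOrders (X : Type*) : Type _ :=
  {r : X → X → Prop //
    (∀ a, ¬ r a a) ∧ (∀ a b c, r a b → r b c → r a c) ∧ ∀ a b, a ≠ b → r a b ∨ r b a}

/-- The σ-algebra on the space of strict total orders generated by the events fixing
the relative order of finitely many distinct elements. -/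
instance ordersMeasurableSpace (X : Type*) : MeasurableSpace (StrictTotalOrders X) :=
  MeasurableSpace.generateFrom
    {s | ∃ l : List X, l.Nodup ∧ s = {π : StrictTotalOrders X | l.Chain' π.1}}

/-- `P` is a stochastic choice dataset on the collection `𝒜` of (finite, nonempty)
menus: choice probabilities are nonnegative and sum to one over each menu. -/
def IsStochasticDataset {X : Type*} (𝒜 : Set (Finset X)) (P : Finset X → X → ℝ) : Prop :=
  ∀ A ∈ 𝒜, A.Nonempty ∧ (∀ x ∈ A, 0 ≤ P A x) ∧ ∑ x ∈ A, P A x = 1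

/-- `P` is rationalizable: there is a probability measure `ν` over strict total orders
of `X` such that the probability that `x` beats every other element of `A` equals
`P A x` for every menu `A ∈ 𝒜` and `x ∈ A`. -/
def StochRationalizable {X : Type*} (𝒜 : Set (Finset X)) (P : Finset X → X → ℝ) : Prop :=
  ∃ ν : Measure (StrictTotalOrders X), IsProbabilityMeasure ν ∧
    ∀ A ∈ 𝒜, ∀ x ∈ A,
      ν {π : StrictTotalOrders X | ∀ y ∈ A, y ≠ x → π.1 x y} = ENNReal.ofReal (P A x)

/-- The Axiom of Revealed Stochastic Preference: for every finite sequence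
`(A₁,x₁),…,(A_n,x_n)` from the domain of `P` (repetitions allowed),
`∑ᵢ P(Aᵢ,xᵢ)` is at most the maximum, over strict total orders, of the number of
indices `i` such that `xᵢ` is top-ranked in `Aᵢ`. -/
def ARSP {X : Type*} (𝒜 : Set (Finset X)) (P : Finset X → X → ℝ) : Prop :=
  ∀ (n : ℕ) (A : Fin n → Finset X) (x : Fin n → X),
    (∀ i, A i ∈ 𝒜 ∧ x i ∈ A i) →
    ∃ π : StrictTotalOrders X,
      ∑ i, P (A i) (x i) ≤
        ((Finset.univ.filter fun i : Fin n => ∀ y ∈ A i, y ≠ x i → π.1 (x i) y).card : ℝ)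

/-!
Rationalizability ⇒ ARSP is the first moment method: under `ν`, the expected number of indices
`i` with `xᵢ` on top of `Aᵢ` is `∑ᵢ P(Aᵢ, xᵢ)`, so some order does at least as well.

For the converse, fix finitely many menus. The vector of their choice probabilities has the
same coordinate sum (the number of menus) as each vector of top-indicators of an order; ARSP says no
nonnegative integer weighting separates it from those finitely many 0/1 vectors; by integer
rounding no real weighting does either, so Hahn–Banach puts it in their convex hull, i.e. a
finitely supported distribution over orders matches `P` on those menus. An ultrafilter limit of
these distributions is a finitely additive probability on all sets of orders matching `P`
everywhere. Orders form a compact space (a closed subspace of `X → X → Bool`) whose clopen sets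
include the top events; a finitely additive content on the clopen sets of a compact space is
σ-additive, so Carathéodory extends it to the required measure.
-/

open Set Filter Topology
open scoped ENNReal

section Content

variable {Ω : Type*}

lemma PMF.toOuterMeasure_union (p : PMF Ω) {s t : Set Ω} (hst : Disjoint s t) :
    p.toOuterMeasure (s ∪ t) = p.toOuterMeasure s + p.toOuterMeasure t := by
  simp only [PMF.toOuterMeasure_apply, indicator_union_of_disjoint hst, ENNReal.tsum_add]

theorem exists_additive_limit {ι : Type*} (l : Filter ι) [l.NeBot] (ν : ι → Set Ω → ℝ≥0∞)
    (hν : ∀ i ⦃s t⦄, Disjoint s t → ν i (s ∪ t) = ν i s + ν i t) :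
    ∃ μ : Set Ω → ℝ≥0∞, (∀ ⦃s t⦄, Disjoint s t → μ (s ∪ t) = μ s + μ t) ∧
      ∀ s c, (∀ᶠ i in l, ν i s = c) → μ s = c := by
  let U := Ultrafilter.of l
  -- `ℝ≥0∞` is compact, so every ultrafilter limit exists
  have hU : ∀ s, Tendsto (fun i => ν i s) U (𝓝 (U.map fun i => ν i s).lim) :=
    fun s => (U.map _).le_nhds_lim
  refine ⟨fun s => (U.map fun i => ν i s).lim, fun s t hst => ?_, fun s c hc => ?_⟩
  · exact tendsto_nhds_unique ((hU (s ∪ t)).congr fun i => hν i hst) ((hU s).add (hU t))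
  · have hc' : ∀ᶠ i in (U : Filter ι), ν i s = c := Ultrafilter.of_le l hc
    exact tendsto_nhds_unique (hU s) (tendsto_const_nhds.congr' (hc'.mono fun _ => Eq.symm))

variable [TopologicalSpace Ω]

lemma isSetRing_isClopen : IsSetRing {s : Set Ω | IsClopen s} :=
  ⟨isClopen_empty, fun _ _ => IsClopen.union, fun _ _ => IsClopen.diff⟩

/-- A clopen set covered by countably many clopen sets is covered by finitely many of them, so
finite additivity on clopen sets is already σ-additivity. -/
theorem exists_measure_eq_of_isClopen [CompactSpace Ω] [MeasurableSpace Ω]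
    (hgen : ‹MeasurableSpace Ω› ≤ MeasurableSpace.generateFrom {s | IsClopen s})
    (μ : Set Ω → ℝ≥0∞) (hμ : μ ∅ = 0)
    (hadd : ∀ ⦃s t⦄, IsClopen s → IsClopen t → Disjoint s t → μ (s ∪ t) = μ s + μ t) :
    ∃ ν : Measure Ω, ∀ s, IsClopen s → MeasurableSet s → ν s = μ s := by
  let m := isSetRing_isClopen.addContent_of_union μ hμ fun hs ht => hadd hs ht
  have hσ : m.IsSigmaSubadditive := by
    intro f hf hU
    obtain ⟨J, hJ⟩ := hU.isClosed.isCompact.elim_finite_subcover f (fun i => (hf i).isOpen)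
      subset_rfl
    calc m (⋃ i, f i) ≤ m (⋃ i ∈ J, f i) :=
          addContent_mono isSetRing_isClopen.isSetSemiring hU
            (isClopen_biUnion_finset fun i _ => hf i) hJ
      _ ≤ ∑ i ∈ J, m (f i) := addContent_biUnion_le isSetRing_isClopen fun i _ => hf i
      _ ≤ ∑' i, m (f i) := ENNReal.sum_le_tsum J
  let ν := @AddContent.measure _ _ (.generateFrom _) m isSetRing_isClopen.isSetSemiring le_rfl hσ
  refine ⟨ν.trim hgen, fun s hs hsm => ?_⟩
  rw [trim_measurableSet_eq hgen hsm]
  exact AddContent.measure_eq (mα := .generateFrom _) m _ rfl hσ hs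

end Content

section Convexity

variable {ι : Type*} [Fintype ι]

theorem exists_dotProduct_add_lt_of_notMem_convexHull {V : Set (ι → ℝ)} (hV : V.Finite)
    {p : ι → ℝ} (hp : p ∉ convexHull ℝ V) :
    ∃ (c : ι → ℝ) (ε : ℝ), 0 < ε ∧ ∀ v ∈ V, c ⬝ᵥ v + ε < c ⬝ᵥ p := by
  obtain ⟨f, u, hfV, hfp⟩ := geometric_hahn_banach_closed_point (convex_convexHull ℝ V)
    (hV.isCompact_convexHull ℝ).isClosed hp
  have hf : ∀ w, f w = (fun i => f fun j => if i = j then 1 else 0) ⬝ᵥ w := fun w => by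
    simp only [dotProduct, mul_comm, ← smul_eq_mul]
    exact LinearMap.pi_apply_eq_sum_univ (f : (ι → ℝ) →ₗ[ℝ] ℝ) w
  refine ⟨fun i => f fun j => if i = j then 1 else 0, f p - u, sub_pos.2 hfp, fun v hv => ?_⟩
  linarith [hfV v (subset_convexHull ℝ V hv), hf v, hf p]

/-- Rounding `N • c` up, for `N` large against `card ι / ε`, keeps a separating weighting
separating. -/
theorem exists_nat_dotProduct_lt {V : Set (ι → ℝ)} (hV : ∀ v ∈ V, 0 ≤ v ∧ v ≤ 1)
    {c p : ι → ℝ} (hc : 0 ≤ c) (hp : 0 ≤ p) {ε : ℝ} (hε : 0 < ε)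
    (hsep : ∀ v ∈ V, c ⬝ᵥ v + ε ≤ c ⬝ᵥ p) :
    ∃ m : ι → ℕ, ∀ v ∈ V, (fun i => (m i : ℝ)) ⬝ᵥ v < (fun i => (m i : ℝ)) ⬝ᵥ p := by
  obtain ⟨N, hN⟩ := exists_nat_gt (Fintype.card ι / ε)
  have hNε : (Fintype.card ι : ℝ) < N * ε := (div_lt_iff₀ hε).1 hN
  refine ⟨fun i => ⌈N * c i⌉₊, fun v hv => ?_⟩
  have hNc : 0 ≤ (N : ℝ) • c := smul_nonneg N.cast_nonneg hc
  calc (fun i => (⌈N * c i⌉₊ : ℝ)) ⬝ᵥ v ≤ ((N : ℝ) • c + 1) ⬝ᵥ v :=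
        dotProduct_le_dotProduct_of_nonneg_right
          (fun i => (Nat.ceil_lt_add_one (hNc i)).le) (hV v hv).1
    _ = N * (c ⬝ᵥ v) + 1 ⬝ᵥ v := by rw [add_dotProduct, smul_dotProduct, smul_eq_mul]
    _ ≤ N * (c ⬝ᵥ v) + Fintype.card ι := by
        gcongr
        simpa using dotProduct_le_dotProduct_of_nonneg_left (hV v hv).2 zero_le_one
    _ < N * (c ⬝ᵥ p) := by nlinarith [hsep v hv]
    _ = ((N : ℝ) • c) ⬝ᵥ p := by rw [smul_dotProduct, smul_eq_mul]
    _ ≤ (fun i => (⌈N * c i⌉₊ : ℝ)) ⬝ᵥ p :=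
        dotProduct_le_dotProduct_of_nonneg_right (fun i => Nat.le_ceil _) hp

theorem mem_convexHull_of_forall_nat {V : Set (ι → ℝ)} (hV : V ⊆ univ.pi fun _ => {0, 1})
    {p : ι → ℝ} (hp : 0 ≤ p) (hsum : ∀ v ∈ V, ∑ i, v i = ∑ i, p i)
    (h : ∀ m : ι → ℕ, ∃ v ∈ V, (fun i => (m i : ℝ)) ⬝ᵥ p ≤ (fun i => (m i : ℝ)) ⬝ᵥ v) :
    p ∈ convexHull ℝ V := by
  by_contra hpV
  have hVfin : V.Finite := (Finite.pi fun _ => toFinite {0, 1}).subset hV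
  obtain ⟨c, ε, hε, hsep⟩ := exists_dotProduct_add_lt_of_notMem_convexHull hVfin hpV
  -- since all coordinate sums agree, adding a constant to `c` keeps it separating
  let c' : ι → ℝ := c + (∑ i, |c i|) • 1
  have hc' : 0 ≤ c' := fun i => by
    have := Finset.single_le_sum (fun j _ => abs_nonneg (c j)) (Finset.mem_univ i)
    simp only [c', Pi.zero_apply, Pi.add_apply, Pi.smul_apply, Pi.one_apply, smul_eq_mul, mul_one]
    linarith [neg_abs_le (c i)]
  have hshift : ∀ w, c' ⬝ᵥ w = c ⬝ᵥ w + (∑ i, |c i|) * ∑ i, w i := fun w => by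
    rw [add_dotProduct, smul_dotProduct, one_dotProduct, smul_eq_mul]
  have h01 : ∀ v ∈ V, 0 ≤ v ∧ v ≤ 1 := fun v hv => by
    have hv' : ∀ i, v i = 0 ∨ v i = 1 := fun i => hV hv i trivial
    refine ⟨fun i => ?_, fun i => ?_⟩ <;> rcases hv' i with h | h <;> simp [h]
  obtain ⟨m, hm⟩ := exists_nat_dotProduct_lt h01 hc' hp hε fun v hv => by
    rw [hshift, hshift, hsum v hv]
    linarith [hsep v hv]
  obtain ⟨v, hv, hle⟩ := h m
  exact (hm v hv).not_ge hle

end Convexity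

theorem exists_pmf_toOuterMeasure_eq {Ω ι : Type*} (E : ι → Set Ω) {p : ι → ℝ}
    (hp : p ∈ convexHull ℝ (range fun ω i => (E i).indicator 1 ω)) :
    ∃ ρ : PMF Ω, ∀ i, ρ.toOuterMeasure (E i) = ENNReal.ofReal (p i) := by
  obtain ⟨κ, _, w, z, hw0, hw1, hz, rfl⟩ := mem_convexHull_iff_exists_fintype.1 hp
  choose ω hω using hz
  have hw : ∑ k, ENNReal.ofReal (w k) = 1 := by
    rw [← ENNReal.ofReal_sum_of_nonneg fun k _ => hw0 k, hw1, ENNReal.ofReal_one]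
  refine ⟨(PMF.ofFintype _ hw).map ω, fun i => ?_⟩
  rw [PMF.toOuterMeasure_map_apply, PMF.toOuterMeasure_apply_fintype, Finset.sum_apply,
    ENNReal.ofReal_sum_of_nonneg fun k _ => ?_]
  · refine Finset.sum_congr rfl fun k _ => ?_
    simp only [← hω k, indicator_apply, mem_preimage, PMF.ofFintype_apply, Pi.smul_apply,
      Pi.one_apply, smul_eq_mul]
    split_ifs <;> simp
  · simp only [← hω k, Pi.smul_apply, smul_eq_mul]
    exact mul_nonneg (hw0 k) (indicator_nonneg (fun _ _ => zero_le_one) _)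

namespace StrictTotalOrders

variable {X : Type*}

def topEvent (A : Finset X) (x : X) : Set (StrictTotalOrders X) :=
  {π | ∀ y ∈ A, y ≠ x → π.1 x y}

lemma topEvent_eq_biInter (A : Finset X) (x : X) :
    topEvent A x = ⋂ y ∈ A.erase x, {π | π.1 x y} := by
  ext π
  simp only [topEvent, mem_ofPred_eq, mem_iInter, Finset.mem_erase]
  exact forall_congr' fun y => ⟨fun h hy => h hy.2 hy.1, fun h hyA hyx => h ⟨hyx, hyA⟩⟩

lemma exists_mem_topEvent (π : StrictTotalOrders X) {A : Finset X} (hA : A.Nonempty) :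
    ∃ x ∈ A, π ∈ topEvent A x := by
  have : IsStrictOrder X π.1 := { irrefl := π.2.1, trans := π.2.2.1 }
  obtain ⟨⟨x, hx⟩, -, hmin⟩ := (A.finite_toSet.wellFoundedOn (r := π.1)).has_min univ
    ⟨⟨_, hA.choose_spec⟩, trivial⟩
  exact ⟨x, hx, fun y hy hyx => (π.2.2.2 x y hyx.symm).resolve_right (hmin ⟨y, hy⟩ trivial)⟩

lemma eq_of_mem_topEvent {π : StrictTotalOrders X} {A : Finset X} {x y : X} (hx : x ∈ A)
    (hy : y ∈ A) (hπx : π ∈ topEvent A x) (hπy : π ∈ topEvent A y) : x = y := by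
  by_contra hxy
  exact π.2.1 x (π.2.2.1 x y x (hπx y hy (Ne.symm hxy)) (hπy x hx hxy))

lemma sum_indicator_topEvent (π : StrictTotalOrders X) {A : Finset X} (hA : A.Nonempty) :
    ∑ x ∈ A, (topEvent A x).indicator (1 : StrictTotalOrders X → ℝ) π = 1 := by
  obtain ⟨x, hx, hπx⟩ := exists_mem_topEvent π hA
  rw [Finset.sum_eq_single_of_mem x hx fun y hy hyx =>
    indicator_of_notMem (fun hπy => hyx (eq_of_mem_topEvent hy hx hπy hπx)) _,
    indicator_of_mem hπx, Pi.one_apply]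

lemma measurableSet_setOf_rel {a b : X} (hab : a ≠ b) :
    MeasurableSet {π : StrictTotalOrders X | π.1 a b} :=
  MeasurableSpace.measurableSet_generateFrom
    ⟨[a, b], by simp [hab], by ext; exact List.isChain_pair.symm⟩

lemma measurableSet_topEvent (A : Finset X) (x : X) : MeasurableSet (topEvent A x) := by
  rw [topEvent_eq_biInter]
  exact Finset.measurableSet_biInter _ fun y hy =>
    measurableSet_setOf_rel (Finset.ne_of_mem_erase hy).symm

noncomputable def toBoolRel (π : StrictTotalOrders X) : X → X → Bool := fun a b => decide (π.1 a b)

noncomputable instance : TopologicalSpace (StrictTotalOrders X) := .induced toBoolRel inferInstance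

lemma isClosed_range_toBoolRel : IsClosed (range (toBoolRel (X := X))) := by
  have hrange : range (toBoolRel (X := X)) =
      {g | ∀ a, g a a = false} ∩ {g | ∀ a b c, g a b = true → g b c = true → g a c = true} ∩
        {g | ∀ a b, a ≠ b → g a b = true ∨ g b a = true} := by
    ext g
    constructor
    · rintro ⟨π, rfl⟩
      exact ⟨⟨fun a => by simpa [toBoolRel] using π.2.1 a,
        fun a b c => by simpa [toBoolRel] using π.2.2.1 a b c⟩,
        fun a b => by simpa [toBoolRel] using π.2.2.2 a b⟩
    · rintro ⟨⟨hirr, htrans⟩, htot⟩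
      exact ⟨⟨fun a b => g a b = true, fun a => by simp [hirr a], htrans, htot⟩,
        by ext; simp [toBoolRel]⟩
  have hcl : ∀ a b (v : Bool), IsClopen {g : X → X → Bool | g a b = v} := fun a b v =>
    (isClopen_discrete {v}).preimage ((continuous_apply b).comp (continuous_apply a))
  rw [hrange]
  simp only [ofPred_forall]
  refine ((isClosed_iInter fun a => (hcl a a false).isClosed).inter
    (isClosed_iInter fun a => isClosed_iInter fun b => isClosed_iInter fun c =>
      isClosed_imp (hcl a b true).isOpen (isClosed_imp (hcl b c true).isOpen
        (hcl a c true).isClosed))).inter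
    (isClosed_iInter fun a => isClosed_iInter fun b => isClosed_iInter fun _ =>
      (hcl a b true).isClosed.union (hcl b a true).isClosed)

instance : CompactSpace (StrictTotalOrders X) :=
  ⟨by
    rw [(Topology.IsInducing.induced toBoolRel).isCompact_iff, image_univ]
    exact isClosed_range_toBoolRel.isCompact⟩

lemma isClopen_setOf_rel (a b : X) : IsClopen {π : StrictTotalOrders X | π.1 a b} := by
  have hrel : Continuous (toBoolRel (X := X)) := continuous_induced_dom
  have hcont : Continuous fun π : StrictTotalOrders X => toBoolRel π a b :=
    (continuous_apply b).comp ((continuous_apply a).comp hrel)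
  convert (isClopen_discrete {true}).preimage hcont
  ext
  simp [toBoolRel]

lemma isClopen_topEvent (A : Finset X) (x : X) : IsClopen (topEvent A x) := by
  rw [topEvent_eq_biInter]
  exact isClopen_biInter_finset fun y _ => isClopen_setOf_rel x y

lemma isClopen_setOf_isChain :
    ∀ l : List X, IsClopen {π : StrictTotalOrders X | l.IsChain π.1}
  | [] => by simp only [List.isChain_nil, ofPred_true, isClopen_univ]
  | [_] => by simp only [List.isChain_singleton, ofPred_true, isClopen_univ]
  | a :: b :: l => by
    have : {π : StrictTotalOrders X | (a :: b :: l).IsChain π.1} =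
        {π | π.1 a b} ∩ {π | (b :: l).IsChain π.1} := by
      ext
      exact List.isChain_cons_cons
    rw [this]
    exact (isClopen_setOf_rel a b).inter (isClopen_setOf_isChain (b :: l))

lemma measurableSpace_le_generateFrom_isClopen :
    ordersMeasurableSpace X ≤ MeasurableSpace.generateFrom {s | IsClopen s} :=
  MeasurableSpace.generateFrom_le fun _ ⟨l, _, hs⟩ =>
    hs ▸ MeasurableSpace.measurableSet_generateFrom (isClopen_setOf_isChain l)

end StrictTotalOrders

open StrictTotalOrders

section Rationalizability

variable {X : Type*} {𝒜 : Set (Finset X)} {P : Finset X → X → ℝ}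

lemma natCast_card_filter_eq_sum_indicator_topEvent {R : Type*} [AddCommMonoidWithOne R] {n : ℕ}
    (A : Fin n → Finset X) (x : Fin n → X) (π : StrictTotalOrders X) :
    (((Finset.univ.filter fun i : Fin n => ∀ y ∈ A i, y ≠ x i → π.1 (x i) y).card : ℕ) : R) =
      ∑ i, (topEvent (A i) (x i)).indicator 1 π := by
  rw [Finset.natCast_card_filter]
  simp [indicator_apply, topEvent]

theorem StochRationalizable.arsp (h : StochRationalizable 𝒜 P) : ARSP 𝒜 P := by
  obtain ⟨ν, hν, hνP⟩ := h
  intro n A x hAx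
  let count : StrictTotalOrders X → ℝ≥0∞ := fun π => ∑ i, (topEvent (A i) (x i)).indicator 1 π
  have hcount : ∫⁻ π, count π ∂ν = ∑ i, ENNReal.ofReal (P (A i) (x i)) := by
    rw [lintegral_finsetSum _ fun i _ => measurable_one.indicator (measurableSet_topEvent _ _)]
    refine Finset.sum_congr rfl fun i _ => ?_
    rw [lintegral_indicator_one (measurableSet_topEvent _ _)]
    exact hνP _ (hAx i).1 _ (hAx i).2
  obtain ⟨π, hπ⟩ := exists_lintegral_le (hcount ▸ ENNReal.sum_ne_top.2 fun _ _ => by simp)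
  refine ⟨π, (ENNReal.ofReal_le_ofReal_iff (Nat.cast_nonneg _)).1 ?_⟩
  calc ENNReal.ofReal (∑ i, P (A i) (x i)) ≤ ∑ i, ENNReal.ofReal (P (A i) (x i)) :=
        Finset.le_sum_of_subadditive _ ENNReal.ofReal_zero.le
          (fun _ _ => ENNReal.ofReal_add_le) _ _
    _ ≤ count π := hcount ▸ hπ
    _ = _ := by rw [ENNReal.ofReal_natCast, natCast_card_filter_eq_sum_indicator_topEvent]

namespace ARSP

theorem exists_le_sum_nat_mul (h : ARSP 𝒜 P) {ι : Type*} [Fintype ι] (A : ι → Finset X)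
    (x : ι → X) (hAx : ∀ i, A i ∈ 𝒜 ∧ x i ∈ A i) (m : ι → ℕ) :
    ∃ π, ∑ i, (m i : ℝ) * P (A i) (x i) ≤
      ∑ i, (m i : ℝ) * (topEvent (A i) (x i)).indicator 1 π := by
  let e := (Fintype.equivFin ((i : ι) × Fin (m i))).symm
  have hsum : ∀ g : ι → ℝ, ∑ j, g (e j).1 = ∑ i, (m i : ℝ) * g i := fun g => by
    rw [e.sum_comp fun s => g s.1, Fintype.sum_sigma]
    simp
  obtain ⟨π, hπ⟩ := h _ (fun j => A (e j).1) (fun j => x (e j).1) fun j => hAx _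
  refine ⟨π, ?_⟩
  rwa [natCast_card_filter_eq_sum_indicator_topEvent, hsum fun i => P (A i) (x i),
    hsum fun i => (topEvent (A i) (x i)).indicator 1 π] at hπ

theorem exists_pmf (hP : IsStochasticDataset 𝒜 P) (h : ARSP 𝒜 P) (M : Finset (Finset X))
    (hM : ∀ A ∈ M, A ∈ 𝒜) :
    ∃ ρ : PMF (StrictTotalOrders X),
      ∀ A ∈ M, ∀ x ∈ A, ρ.toOuterMeasure (topEvent A x) = ENNReal.ofReal (P A x) := by
  let ι := (A : M) × (A : Finset X)
  let χ : StrictTotalOrders X → ι → ℝ := fun π i => (topEvent i.1.1 i.2.1).indicator 1 π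
  let p : ι → ℝ := fun i => P i.1.1 i.2.1
  have hsum_eq_card : ∀ g : ι → ℝ, (∀ A : M, ∑ x : (A : Finset X), g ⟨A, x⟩ = 1) →
      ∑ i, g i = Fintype.card M := fun g hg => by
    rw [Fintype.sum_sigma, Finset.sum_congr rfl fun A _ => hg A]
    simp
  have hχ01 : range χ ⊆ univ.pi fun _ => {0, 1} := by
    rintro _ ⟨π, rfl⟩ i -
    by_cases hπ : π ∈ topEvent i.1.1 i.2.1 <;> simp [χ, hπ]
  have hχsum : ∀ v ∈ range χ, ∑ i, v i = ∑ i, p i := by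
    rintro _ ⟨π, rfl⟩
    rw [hsum_eq_card _ fun A => ?_, hsum_eq_card _ fun A => ?_]
    · rw [Finset.sum_coe_sort A.1 fun x => P A x]
      exact (hP _ (hM _ A.2)).2.2
    · rw [Finset.sum_coe_sort A.1 fun x => (topEvent A.1 x).indicator 1 π]
      exact sum_indicator_topEvent π (hP _ (hM _ A.2)).1
  have hnat : ∀ m : ι → ℕ, ∃ v ∈ range χ,
      (fun i => (m i : ℝ)) ⬝ᵥ p ≤ (fun i => (m i : ℝ)) ⬝ᵥ v := fun m =>
    exists_range_iff.2 <| h.exists_le_sum_nat_mul (fun i : ι => i.1.1) (fun i => i.2.1)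
      (fun i => ⟨hM _ i.1.2, i.2.2⟩) m
  obtain ⟨ρ, hρ⟩ := exists_pmf_toOuterMeasure_eq (fun i : ι => topEvent i.1.1 i.2.1)
    (mem_convexHull_of_forall_nat hχ01 (fun i => (hP _ (hM _ i.1.2)).2.1 _ i.2.2) hχsum hnat)
  exact ⟨ρ, fun A hA x hx => hρ ⟨⟨A, hA⟩, ⟨x, hx⟩⟩⟩

theorem stochRationalizable (hP : IsStochasticDataset 𝒜 P) (h : ARSP 𝒜 P) :
    StochRationalizable 𝒜 P := by
  choose ρ hρ using fun M : Finset (Finset X) =>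
    h.exists_pmf hP (M.filter (· ∈ 𝒜)) fun A hA => (Finset.mem_filter.1 hA).2
  obtain ⟨μ, hadd, hlim⟩ := exists_additive_limit atTop (fun M => (ρ M).toOuterMeasure)
    fun M _ _ => (ρ M).toOuterMeasure_union
  obtain ⟨ν, hν⟩ := exists_measure_eq_of_isClopen measurableSpace_le_generateFrom_isClopen μ
    (hlim ∅ 0 (by simp)) fun _ _ _ _ hst => hadd hst
  refine ⟨ν, ⟨?_⟩, fun A hA x hx => ?_⟩
  · rw [hν univ isClopen_univ MeasurableSet.univ]
    exact hlim _ _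
      (.of_forall fun M => (ρ M).toOuterMeasure_apply_eq_one_iff _ |>.2 (subset_univ _))
  · change ν (topEvent A x) = _
    rw [hν _ (isClopen_topEvent A x) (measurableSet_topEvent A x)]
    refine hlim _ _ ((eventually_ge_atTop {A}).mono fun M hM => hρ M A ?_ x hx)
    exact Finset.mem_filter.2 ⟨hM (Finset.mem_singleton_self A), hA⟩

end ARSP

end Rationalizability

/-- McFadden–Richter for arbitrary (possibly infinite) sets of alternatives: a
stochastic choice dataset is rationalizable by a probability measure over strict
total orders if and only if it satisfies the Axiom of Revealed Stochastic
Preference. -/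
theorem stochastic_rationalizability_infinite {X : Type*}
    (𝒜 : Set (Finset X)) (P : Finset X → X → ℝ) (hP : IsStochasticDataset 𝒜 P) :
    StochRationalizable 𝒜 P ↔ ARSP 𝒜 P :=
  ⟨StochRationalizable.arsp, ARSP.stochRationalizable hP⟩
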